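/- arXiv:2203.09906 — 5 statements merged into one kernel-verified Lean document; each statement's English description precedes it below -/
import Mathlib

section
/- Let n ≥ 3, m ≥ 1 be integers with (n,m) ≠ (3,1), let q = m(n+1)+2n−1, and let r be an integer with 1 ≤ r ≤ n/2 (so that n−r ≥ n/2). Let S = (1/2)·[(m+1)(n−r)+n−1]·[(m+1)(n−r)+n]. Then S > (n−r)·q. -/
/-- For integers `n ≥ 3`, `m ≥ 1` with `(n,m) ≠ (3,1)`, `q = m(n+1)+2n−1`,
and `1 ≤ r ≤ n/2`, with `S = [(m+1)(n−r)+n−1]·[(m+1)(n−r)+n]/2`,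
we have `S > (n−r)·q`. -/
theorem stmt_4 (n m r : ℤ) (hn : 3 ≤ n) (hm : 1 ≤ m)
    (hnm : ¬(n = 3 ∧ m = 1)) (hr1 : 1 ≤ r) (hr2 : (r : ℚ) ≤ (n : ℚ) / 2)
    (q : ℤ) (hq : q = m * (n + 1) + 2 * n - 1)
    (S : ℚ)
    (hS : S = (1 / 2) * (((m + 1) * (n - r) + n - 1 : ℤ) : ℚ)
        * (((m + 1) * (n - r) + n : ℤ) : ℚ)) :
    S > ((n - r : ℤ) : ℚ) * (q : ℚ) := by
  subst hq hS
  have hN : (3:ℚ) ≤ (n:ℚ) := by exact_mod_cast hn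
  have hM : (1:ℚ) ≤ (m:ℚ) := by exact_mod_cast hm
  have hR : (1:ℚ) ≤ (r:ℚ) := by exact_mod_cast hr1
  push_cast
  set N : ℚ := (n : ℚ)
  set M : ℚ := (m : ℚ)
  set R : ℚ := (r : ℚ)
  have hK : N / 2 ≤ N - R := by linarith
  nlinarith [sq_nonneg (N - R), sq_nonneg ((M+1)*(N-R) - 2), mul_le_mul hM hK (by linarith) (by linarith), sq_nonneg (N - 2*R), mul_pos (show (0:ℚ) < M by linarith) (show (0:ℚ) < N - R by linarith)]
end

section
/- For odd n ≥ 3, consider the 3×n matrix A with entries: A(1,i) = 4n+(i+1)/2 for odd i, A(1,i) = (9n+1)/2 + i/2 for even i; A(2,i) = (7n+1)/2 + (i−1)/2 for odd i, A(2,i) = 3n + i/2 for even i; A(3,i) = 3n+1−i. Then the entries of A are exactly the integers in [2n+1, 5n] (each appearing once), and every column sums to (21n+3)/2. -/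
/-- The 3×n labeling matrix used for `f_n ∘ O_1`, odd `n`. -/
def matA (n : ℤ) : Fin 3 → ℤ → ℤ
  | 0, i => if Odd i then 4 * n + (i + 1) / 2 else (9 * n + 1) / 2 + i / 2
  | 1, i => if Odd i then (7 * n + 1) / 2 + (i - 1) / 2 else 3 * n + i / 2
  | 2, i => 3 * n + 1 - i

lemma matA_eval (n i : ℤ) (j : Fin 3) :
    matA n j i = if j = 0 then (if i % 2 = 1 then 4 * n + (i + 1) / 2 else (9 * n + 1) / 2 + i / 2)
      else if j = 1 then (if i % 2 = 1 then (7 * n + 1) / 2 + (i - 1) / 2 else 3 * n + i / 2)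
      else 3 * n + 1 - i := by
  fin_cases j <;> simp [matA, Int.odd_iff]

/-- For odd `n ≥ 3`, the entries of the matrix `matA n` (columns indexed by
`1 ≤ i ≤ n`) are exactly the integers in `[2n+1, 5n]`, each appearing once,
and every column sums to `(21n+3)/2`. -/
theorem stmt_6 (n : ℤ) (hn : 3 ≤ n) (hodd : Odd n) :
    Set.BijOn (fun p : Fin 3 × ℤ => matA n p.1 p.2)
      ((Set.univ : Set (Fin 3)) ×ˢ Set.Icc 1 n)
      (Set.Icc (2 * n + 1) (5 * n)) ∧
    ∀ i ∈ Set.Icc 1 n, matA n 0 i + matA n 1 i + matA n 2 i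
      = (21 * n + 3) / 2 := by
  obtain ⟨m, hm⟩ := hodd
  subst hm
  constructor
  · refine ⟨?_, ?_, ?_⟩
    · rintro ⟨j, i⟩ ⟨-, hi⟩
      simp only [Set.mem_Icc] at hi ⊢
      fin_cases j <;> simp [matA_eval] <;> first | (split <;> omega) | omega
    · rintro ⟨j, i⟩ ⟨-, hi⟩ ⟨j', i'⟩ ⟨-, hi'⟩ heq
      simp only [Set.mem_Icc] at hi hi'
      simp only [matA_eval] at heq
      fin_cases j <;> fin_cases j' <;> simp_all <;>
        first
          | (split at heq <;> split at heq <;> omega)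
          | (split at heq <;> omega)
          | omega
    · rintro y hy
      simp only [Set.mem_Icc] at hy
      by_cases h1 : y ≤ 6 * m + 3
      · exact ⟨(2, 6 * m + 4 - y), ⟨trivial, by simp; omega⟩, by simp [matA_eval]; omega⟩
      by_cases h2 : y ≤ 7 * m + 3
      · refine ⟨(1, 2 * (y - (6 * m + 3))), ⟨trivial, by simp; omega⟩, ?_⟩
        have : (2 * (y - (6 * m + 3))) % 2 = 0 := by omega
        simp [matA_eval, this]; omega
      by_cases h3 : y ≤ 8 * m + 4
      · refine ⟨(1, 2 * y - (14 * m + 7)), ⟨trivial, by simp; omega⟩, ?_⟩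
        have : (2 * y - (14 * m + 7)) % 2 = 1 := by omega
        simp [matA_eval, this]; omega
      by_cases h4 : y ≤ 9 * m + 5
      · refine ⟨(0, 2 * y - (16 * m + 9)), ⟨trivial, by simp; omega⟩, ?_⟩
        have : (2 * y - (16 * m + 9)) % 2 = 1 := by omega
        simp [matA_eval, this]; omega
      · refine ⟨(0, 2 * y - (18 * m + 10)), ⟨trivial, by simp; omega⟩, ?_⟩
        have : (2 * y - (18 * m + 10)) % 2 = 0 := by omega
        simp [matA_eval, this]; omega
  · intro i hi
    simp only [Set.mem_Icc] at hi
    by_cases hp : i % 2 = 1 <;> simp [matA_eval, hp] <;> omega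
end

section
/- For all n ≥ 2, χ_la(f_n∘O_1) = 2n + 3. -/
open scoped Classical

/-- Vertex weight: sum of labels of incident edges. -/
noncomputable def weightLA {V : Type} [Fintype V] [DecidableEq V]
    (G : SimpleGraph V) (f : Sym2 V → ℕ) (u : V) : ℕ :=
  ∑ e ∈ G.edgeFinset.filter (fun e => u ∈ e), f e

/-- A local antimagic labeling: a bijection from the edge set onto
`{1, …, q}` such that adjacent vertices get distinct weights. -/
noncomputable def IsLocalAntimagicLA {V : Type} [Fintype V] [DecidableEq V]
    (G : SimpleGraph V) (f : Sym2 V → ℕ) : Prop :=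
  Set.BijOn f G.edgeSet (Set.Icc 1 G.edgeFinset.card) ∧
  ∀ u v, G.Adj u v → weightLA G f u ≠ weightLA G f v

/-- Number of distinct induced vertex colors (weights). -/
noncomputable def colorCountLA {V : Type} [Fintype V] [DecidableEq V]
    (G : SimpleGraph V) (f : Sym2 V → ℕ) : ℕ :=
  (Finset.univ.image (weightLA G f)).card

/-- Local antimagic chromatic number. -/
noncomputable def chiLA {V : Type} [Fintype V] [DecidableEq V]
    (G : SimpleGraph V) : ℕ :=
  sInf {c | ∃ f, IsLocalAntimagicLA G f ∧ colorCountLA G f = c}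

/-- Vertex set of `f_n ∘ O_m`: the center `x`, the triangle vertices
`u_i, v_i` (encoded `Fin n × Fin 2`), the pendants `x_j` at `x`, and the
pendants at the triangle vertices. -/
abbrev FriendCorV (n m : ℕ) : Type :=
  Unit ⊕ (Fin n × Fin 2) ⊕ (Fin m ⊕ Fin n × Fin 2 × Fin m)

/-- The corona product `f_n ∘ O_m` of the friendship graph with the null
graph of order `m`. -/
noncomputable def friendshipCorona (n m : ℕ) : SimpleGraph (FriendCorV n m) :=
  SimpleGraph.fromRel (fun a b =>
    match a, b with
    | Sum.inl _, Sum.inr (Sum.inl _) => True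
    | Sum.inl _, Sum.inr (Sum.inr (Sum.inl _)) => True
    | Sum.inr (Sum.inl (i, k)), Sum.inr (Sum.inl (i', k')) => i = i' ∧ k ≠ k'
    | Sum.inr (Sum.inl (i, k)), Sum.inr (Sum.inr (Sum.inr (i', k', _))) =>
        i = i' ∧ k = k'
    | _, _ => False)

namespace Stmt16
variable {n : ℕ}
abbrev V (n : ℕ) := Unit ⊕ (Fin n × Fin 2) ⊕ (Fin 1 ⊕ Fin n × Fin 2 × Fin 1)
def X : V n := Sum.inl ()
def U (i : Fin n) (k : Fin 2) : V n := Sum.inr (Sum.inl (i, k))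
def Y : V n := Sum.inr (Sum.inr (Sum.inl 0))
def P (i : Fin n) (k : Fin 2) : V n := Sum.inr (Sum.inr (Sum.inr (i, k, 0)))
noncomputable abbrev G (n : ℕ) : SimpleGraph (V n) := friendshipCorona n 1

lemma tri_eq (i : Fin n) {k k' : Fin 2} (hk : k ≠ k') :
    s(U i k, U i k') = s(U i 0, U i 1) := by
  have : (k = 0 ∧ k' = 1) ∨ (k = 1 ∧ k' = 0) := by omega
  rcases this with ⟨rfl, rfl⟩ | ⟨rfl, rfl⟩
  · rfl
  · exact Sym2.eq_swap

lemma mem_edgeSet_iff (e : Sym2 (V n)) :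
    e ∈ (G n).edgeSet ↔
      (e = s(X, Y)) ∨ (∃ i k, e = s(X, U i k)) ∨ (∃ i, e = s(U i 0, U i 1)) ∨
        (∃ i k, e = s(U i k, P i k)) := by
  induction e using Sym2.ind with
  | _ a b =>
    rw [SimpleGraph.mem_edgeSet]
    show (SimpleGraph.fromRel _).Adj a b ↔ _
    rw [SimpleGraph.fromRel_adj]
    constructor
    · rintro ⟨hne, h | h⟩
      · rcases a with _ | ⟨⟨i, k⟩ | (j | ⟨i, k, j⟩)⟩ <;>
          rcases b with _ | ⟨⟨i', k'⟩ | (j' | ⟨i', k', j'⟩)⟩ <;>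
          simp only [] at h
        · right; left; exact ⟨i', k', by simp [X, U]⟩
        · obtain rfl : j' = 0 := Subsingleton.elim _ _
          left; rfl
        · obtain ⟨rfl, hk⟩ := h
          exact Or.inr (Or.inr (Or.inl ⟨_, tri_eq _ hk⟩))
        · obtain ⟨rfl, rfl⟩ := h
          obtain rfl : j' = 0 := Subsingleton.elim _ _
          exact Or.inr (Or.inr (Or.inr ⟨_, _, rfl⟩))
      · rcases a with _ | ⟨⟨i, k⟩ | (j | ⟨i, k, j⟩)⟩ <;>
          rcases b with _ | ⟨⟨i', k'⟩ | (j' | ⟨i', k', j'⟩)⟩ <;>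
          simp only [] at h
        · right; left; exact ⟨i, k, Sym2.eq_swap⟩
        · obtain ⟨rfl, hk⟩ := h
          exact Or.inr (Or.inr (Or.inl ⟨_, tri_eq _ (Ne.symm hk)⟩))
        · obtain rfl : j = 0 := Subsingleton.elim _ _
          left; exact Sym2.eq_swap
        · obtain ⟨rfl, rfl⟩ := h
          obtain rfl : j = 0 := Subsingleton.elim _ _
          exact Or.inr (Or.inr (Or.inr ⟨_, _, Sym2.eq_swap⟩))
    · rintro (h | ⟨i, k, h⟩ | ⟨i, h⟩ | ⟨i, k, h⟩) <;>
        rw [Sym2.eq_iff] at h <;>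
        rcases h with ⟨rfl, rfl⟩ | ⟨rfl, rfl⟩ <;>
        refine ⟨by simp [X, Y, U, P], ?_⟩
      · left; trivial
      · right; trivial
      · left; trivial
      · right; trivial
      · left; exact ⟨rfl, by simp⟩
      · right; exact ⟨rfl, by simp⟩
      · left; exact ⟨rfl, rfl⟩
      · right; exact ⟨rfl, rfl⟩

noncomputable def Edges (n : ℕ) : Finset (Sym2 (V n)) :=
  insert s(X, Y)
    (((Finset.univ : Finset (Fin n × Fin 2)).image fun p => s(X, U p.1 p.2)) ∪
     ((Finset.univ : Finset (Fin n)).image fun i => s(U i 0, U i 1)) ∪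
     ((Finset.univ : Finset (Fin n × Fin 2)).image fun p => s(U p.1 p.2, P p.1 p.2)))

lemma edgeFinset_eq : (G n).edgeFinset = Edges n := by
  ext e
  rw [SimpleGraph.mem_edgeFinset, mem_edgeSet_iff]
  simp only [Edges, Finset.mem_insert, Finset.mem_union, Finset.mem_image,
    Finset.mem_univ, true_and, Prod.exists]
  constructor
  · rintro (h | ⟨i, k, rfl⟩ | ⟨i, rfl⟩ | ⟨i, k, rfl⟩)
    · exact Or.inl h
    · exact Or.inr (Or.inl (Or.inl ⟨i, k, rfl⟩))
    · exact Or.inr (Or.inl (Or.inr ⟨i, rfl⟩))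
    · exact Or.inr (Or.inr ⟨i, k, rfl⟩)
  · rintro (h | (⟨i, k, rfl⟩ | ⟨i, rfl⟩) | ⟨i, k, rfl⟩)
    · exact Or.inl h
    · exact Or.inr (Or.inl ⟨i, k, rfl⟩)
    · exact Or.inr (Or.inr (Or.inl ⟨i, rfl⟩))
    · exact Or.inr (Or.inr (Or.inr ⟨i, k, rfl⟩))

lemma card_edges : (Edges n).card = 5 * n + 1 := by
  rw [Edges]
  rw [Finset.card_insert_of_notMem (by
    simp [Sym2.eq_iff, X, U, Y, P])]
  rw [Finset.card_union_of_disjoint (by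
    rw [Finset.disjoint_left]
    intro e he he'
    rw [Finset.mem_union] at he
    rcases he with he | he
    · simp only [Finset.mem_image, Finset.mem_univ, true_and, Prod.exists] at he he'
      obtain ⟨i, k, rfl⟩ := he
      obtain ⟨i', k', h⟩ := he'
      simp [Sym2.eq_iff, X, U, P] at h
    · simp only [Finset.mem_image, Finset.mem_univ, true_and, Prod.exists] at he he'
      obtain ⟨i, rfl⟩ := he
      obtain ⟨i', k', h⟩ := he'
      simp [Sym2.eq_iff, U, P] at h)]
  rw [Finset.card_union_of_disjoint (by
    rw [Finset.disjoint_left]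
    rintro e he he'
    simp only [Finset.mem_image, Finset.mem_univ, true_and, Prod.exists] at he he'
    obtain ⟨i, k, rfl⟩ := he
    obtain ⟨i', h⟩ := he'
    simp [Sym2.eq_iff, X, U] at h)]
  rw [Finset.card_image_of_injective _ (by
    rintro ⟨i, k⟩ ⟨i', k'⟩ h
    simpa [Sym2.eq_iff, X, U, Prod.ext_iff] using h)]
  rw [Finset.card_image_of_injective _ (by
    intro i i' h
    simpa [Sym2.eq_iff, U, Prod.ext_iff] using h)]
  rw [Finset.card_image_of_injective _ (by
    rintro ⟨i, k⟩ ⟨i', k'⟩ h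
    simpa [Sym2.eq_iff, U, P, Prod.ext_iff] using h)]
  simp
  ring

lemma card_edgeFinset : (G n).edgeFinset.card = 5 * n + 1 := by
  rw [edgeFinset_eq]; exact card_edges



def cu (n : ℕ) (i : Fin n) (k : Fin 2) : ℕ := if k = 0 then n + 1 + i.val else 4*n - 2*i.val
def pq (n : ℕ) (i : Fin n) (k : Fin 2) : ℕ := if k = 0 then 4*n - 1 - 2*i.val else 4*n + 2 + i.val

def lab (n : ℕ) : V n → V n → ℕ
  | Sum.inl _, Sum.inr (Sum.inl (i, k)) => cu n i k
  | Sum.inr (Sum.inl (i, k)), Sum.inl _ => cu n i k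
  | Sum.inl _, Sum.inr (Sum.inr (Sum.inl _)) => 4*n + 1
  | Sum.inr (Sum.inr (Sum.inl _)), Sum.inl _ => 4*n + 1
  | Sum.inr (Sum.inl (i, _)), Sum.inr (Sum.inl (i', _)) => min i.val i'.val + 1
  | Sum.inr (Sum.inl _), Sum.inr (Sum.inr (Sum.inr (i, k, _))) => pq n i k
  | Sum.inr (Sum.inr (Sum.inr (i, k, _))), Sum.inr (Sum.inl _) => pq n i k
  | _, _ => 0

lemma lab_symm (a b : V n) : lab n a b = lab n b a := by
  rcases a with _ | ⟨⟨i, k⟩ | (j | ⟨i, k, j⟩)⟩ <;>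
    rcases b with _ | ⟨⟨i', k'⟩ | (j' | ⟨i', k', j'⟩)⟩ <;>
    simp [lab, Nat.min_comm]

noncomputable def fl (n : ℕ) : Sym2 (V n) → ℕ := Sym2.lift ⟨lab n, lab_symm⟩

@[simp] lemma fl_XU (i : Fin n) (k : Fin 2) : fl n s(X, U i k) = cu n i k := rfl
@[simp] lemma fl_XY : fl n s(X, Y) = 4*n + 1 := rfl
@[simp] lemma fl_UU (i : Fin n) : fl n s(U i 0, U i 1) = i.val + 1 := by
  show min i.val i.val + 1 = i.val + 1
  simp
@[simp] lemma fl_UP (i : Fin n) (k : Fin 2) : fl n s(U i k, P i k) = pq n i k := rfl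



lemma filter_Y :
    (G n).edgeFinset.filter (fun e => (Y : V n) ∈ e) = {s(X, Y)} := by
  ext e
  simp only [Finset.mem_filter, SimpleGraph.mem_edgeFinset, mem_edgeSet_iff,
    Finset.mem_singleton]
  constructor
  · rintro ⟨h | ⟨i, k, rfl⟩ | ⟨i, rfl⟩ | ⟨i, k, rfl⟩, hm⟩
    · exact h
    · simp [Sym2.mem_iff, X, U, Y] at hm
    · simp [Sym2.mem_iff, U, Y] at hm
    · simp [Sym2.mem_iff, U, P, Y] at hm
  · rintro rfl
    exact ⟨Or.inl rfl, by simp⟩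

lemma filter_P (i : Fin n) (k : Fin 2) :
    (G n).edgeFinset.filter (fun e => P i k ∈ e) = {s(U i k, P i k)} := by
  ext e
  simp only [Finset.mem_filter, SimpleGraph.mem_edgeFinset, mem_edgeSet_iff,
    Finset.mem_singleton]
  constructor
  · rintro ⟨h | ⟨i', k', rfl⟩ | ⟨i', rfl⟩ | ⟨i', k', rfl⟩, hm⟩
    · subst h; simp [Sym2.mem_iff, X, Y, P] at hm
    · simp [Sym2.mem_iff, X, U, P] at hm
    · simp [Sym2.mem_iff, U, P] at hm
    · simp only [Sym2.mem_iff, U, P, Prod.ext_iff] at hm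
      rcases hm with hm | hm
      · simp at hm
      · obtain ⟨h1, h2, -⟩ : i = i' ∧ k = k' ∧ True := by
          simpa using hm
        subst h1; subst h2; rfl
  · rintro rfl
    exact ⟨Or.inr (Or.inr (Or.inr ⟨i, k, rfl⟩)), by simp⟩

lemma filter_U (i : Fin n) (k : Fin 2) :
    (G n).edgeFinset.filter (fun e => U i k ∈ e) =
      {s(X, U i k), s(U i 0, U i 1), s(U i k, P i k)} := by
  ext e
  simp only [Finset.mem_filter, SimpleGraph.mem_edgeFinset, mem_edgeSet_iff,
    Finset.mem_insert, Finset.mem_singleton]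
  constructor
  · rintro ⟨h | ⟨i', k', rfl⟩ | ⟨i', rfl⟩ | ⟨i', k', rfl⟩, hm⟩
    · subst h; simp [Sym2.mem_iff, X, Y, U] at hm
    · left
      simp only [Sym2.mem_iff, X, U, Prod.ext_iff] at hm
      rcases hm with hm | hm
      · simp at hm
      · obtain ⟨h1, h2⟩ : i = i' ∧ k = k' := by simpa using hm
        subst h1; subst h2; rfl
    · right; left
      simp only [Sym2.mem_iff, U, Prod.ext_iff] at hm
      have : i = i' := by
        rcases hm with hm | hm
        · have h' : i = i' ∧ k = 0 := by simpa using hm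
          exact h'.1
        · have h' : i = i' ∧ k = 1 := by simpa using hm
          exact h'.1
      subst this; rfl
    · right; right
      simp only [Sym2.mem_iff, U, P, Prod.ext_iff] at hm
      rcases hm with hm | hm
      · obtain ⟨h1, h2⟩ : i = i' ∧ k = k' := by simpa using hm
        subst h1; subst h2; rfl
      · simp at hm
  · rintro (rfl | rfl | rfl)
    · exact ⟨Or.inr (Or.inl ⟨i, k, rfl⟩), by simp⟩
    · refine ⟨Or.inr (Or.inr (Or.inl ⟨i, rfl⟩)), ?_⟩
      have : k = 0 ∨ k = 1 := by omega
      rcases this with rfl | rfl <;> simp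
    · exact ⟨Or.inr (Or.inr (Or.inr ⟨i, k, rfl⟩)), by simp⟩

lemma filter_X :
    (G n).edgeFinset.filter (fun e => (X : V n) ∈ e) =
      insert s(X, Y)
        ((Finset.univ : Finset (Fin n × Fin 2)).image fun p => s(X, U p.1 p.2)) := by
  ext e
  simp only [Finset.mem_filter, SimpleGraph.mem_edgeFinset, mem_edgeSet_iff,
    Finset.mem_insert, Finset.mem_image, Finset.mem_univ, true_and, Prod.exists]
  constructor
  · rintro ⟨h | ⟨i', k', rfl⟩ | ⟨i', rfl⟩ | ⟨i', k', rfl⟩, hm⟩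
    · exact Or.inl h
    · exact Or.inr ⟨i', k', rfl⟩
    · simp [Sym2.mem_iff, X, U] at hm
    · simp [Sym2.mem_iff, X, U, P] at hm
  · rintro (rfl | ⟨i, k, rfl⟩)
    · exact ⟨Or.inl rfl, by simp⟩
    · exact ⟨Or.inr (Or.inl ⟨i, k, rfl⟩), by simp⟩



lemma weight_eq_sum (f : Sym2 (V n) → ℕ) (v : V n) (s : Finset (Sym2 (V n)))
    (h : ∀ e, (e ∈ (G n).edgeSet ∧ v ∈ e) ↔ e ∈ s) :
    weightLA (G n) f v = ∑ e ∈ s, f e := by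
  unfold weightLA
  apply Finset.sum_congr _ (fun _ _ => rfl)
  apply Finset.ext
  intro e
  simp only [Finset.mem_filter, SimpleGraph.mem_edgeFinset]
  exact h e

section weights
variable (f : Sym2 (V n) → ℕ)

lemma weight_Y : weightLA (G n) f Y = f s(X, Y) := by
  rw [weight_eq_sum f Y {s(X, Y)} (fun e => by
    rw [show ({s(X, Y)} : Finset (Sym2 (V n)))
        = (G n).edgeFinset.filter (fun e => (Y : V n) ∈ e) from filter_Y.symm,
      Finset.mem_filter, SimpleGraph.mem_edgeFinset]), Finset.sum_singleton]

lemma weight_P (i : Fin n) (k : Fin 2) :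
    weightLA (G n) f (P i k) = f s(U i k, P i k) := by
  rw [weight_eq_sum f (P i k) {s(U i k, P i k)} (fun e => by
    rw [show ({s(U i k, P i k)} : Finset (Sym2 (V n)))
        = (G n).edgeFinset.filter (fun e => P i k ∈ e) from (filter_P i k).symm,
      Finset.mem_filter, SimpleGraph.mem_edgeFinset]), Finset.sum_singleton]

lemma weight_U (i : Fin n) (k : Fin 2) :
    weightLA (G n) f (U i k) =
      f s(X, U i k) + f s(U i 0, U i 1) + f s(U i k, P i k) := by
  rw [weight_eq_sum f (U i k) {s(X, U i k), s(U i 0, U i 1), s(U i k, P i k)} (fun e => by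
    rw [show ({s(X, U i k), s(U i 0, U i 1), s(U i k, P i k)} : Finset (Sym2 (V n)))
        = (G n).edgeFinset.filter (fun e => U i k ∈ e) from (filter_U i k).symm,
      Finset.mem_filter, SimpleGraph.mem_edgeFinset])]
  rw [Finset.sum_insert (by simp [Sym2.eq_iff, X, U, P]),
      Finset.sum_insert (by simp [Sym2.eq_iff, U, P]),
      Finset.sum_singleton, add_assoc]

lemma weight_X :
    weightLA (G n) f X = f s(X, Y) + ∑ p : Fin n × Fin 2, f s(X, U p.1 p.2) := by
  rw [weight_eq_sum f X (insert s(X, Y)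
        ((Finset.univ : Finset (Fin n × Fin 2)).image fun p => s(X, U p.1 p.2))) (fun e => by
    rw [show (insert s(X, Y)
        ((Finset.univ : Finset (Fin n × Fin 2)).image fun p => s(X, U p.1 p.2)))
        = (G n).edgeFinset.filter (fun e => (X : V n) ∈ e) from filter_X.symm,
      Finset.mem_filter, SimpleGraph.mem_edgeFinset])]
  rw [Finset.sum_insert (by
    simp only [Finset.mem_image, Finset.mem_univ, true_and, Prod.exists, not_exists]
    intro i k h
    simp [Sym2.eq_iff, X, U, Y] at h)]
  rw [Finset.sum_image (by
    rintro ⟨i, k⟩ - ⟨i', k'⟩ - h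
    simpa [Sym2.eq_iff, X, U, Prod.ext_iff] using h)]

end weights


lemma sum_distinct_lower (S : Finset ℕ) (h : ∀ s ∈ S, 1 ≤ s) :
    S.card * (S.card + 1) ≤ 2 * ∑ s ∈ S, s := by
  induction S using Finset.strongInduction with
  | _ S ih =>
    rcases S.eq_empty_or_nonempty with rfl | hne
    · simp
    · have hMS : S.max' hne ∈ S := S.max'_mem hne
      have hcard : S.card ≤ S.max' hne := by
        have hsub : S ⊆ Finset.Icc 1 (S.max' hne) := by
          intro s hs
          rw [Finset.mem_Icc]
          exact ⟨h s hs, S.le_max' s hs⟩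
        calc S.card ≤ (Finset.Icc 1 (S.max' hne)).card := Finset.card_le_card hsub
          _ = S.max' hne := by rw [Nat.card_Icc]; omega
      have hih := ih (S.erase (S.max' hne)) (Finset.erase_ssubset hMS)
        (fun s hs => h s (Finset.mem_of_mem_erase hs))
      have hsum : ∑ s ∈ S, s = S.max' hne + ∑ s ∈ S.erase (S.max' hne), s :=
        (Finset.add_sum_erase _ _ hMS).symm
      have hc : (S.erase (S.max' hne)).card = S.card - 1 := Finset.card_erase_of_mem hMS
      have hpos : 1 ≤ S.card := Finset.card_pos.mpr hne
      obtain ⟨m, hm⟩ : ∃ m, S.card = m + 1 := ⟨S.card - 1, by omega⟩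
      rw [hc, hm] at hih
      simp only [Nat.add_sub_cancel] at hih
      rw [hsum, hm]
      calc (m + 1) * (m + 1 + 1) = m * (m + 1) + 2 * (m + 1) := by ring
        _ ≤ 2 * ∑ s ∈ S.erase (S.max' hne), s + 2 * S.max' hne := by
            have : m + 1 ≤ S.max' hne := by omega
            exact Nat.add_le_add hih (by omega)
        _ = 2 * (S.max' hne + ∑ s ∈ S.erase (S.max' hne), s) := by ring

lemma adj_XU (i : Fin n) (k : Fin 2) : (G n).Adj X (U i k) := by
  rw [← SimpleGraph.mem_edgeSet, mem_edgeSet_iff]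
  exact Or.inr (Or.inl ⟨i, k, rfl⟩)

lemma adj_XY : (G n).Adj (X : V n) Y := by
  rw [← SimpleGraph.mem_edgeSet, mem_edgeSet_iff]
  exact Or.inl rfl

lemma mem_edgeSet_iff' (e : Sym2 (V n)) :
    e ∈ (G n).edgeSet ↔
      (e = s(X, Y)) ∨ (∃ i, e = s(X, U i 0)) ∨ (∃ i, e = s(X, U i 1)) ∨
      (∃ i, e = s(U i 0, U i 1)) ∨ (∃ i, e = s(U i 0, P i 0)) ∨
      (∃ i, e = s(U i 1, P i 1)) := by
  rw [mem_edgeSet_iff]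
  constructor
  · rintro (h | ⟨i, k, rfl⟩ | ⟨i, rfl⟩ | ⟨i, k, rfl⟩)
    · exact Or.inl h
    · have : k = 0 ∨ k = 1 := by omega
      rcases this with rfl | rfl
      · exact Or.inr (Or.inl ⟨i, rfl⟩)
      · exact Or.inr (Or.inr (Or.inl ⟨i, rfl⟩))
    · exact Or.inr (Or.inr (Or.inr (Or.inl ⟨i, rfl⟩)))
    · have : k = 0 ∨ k = 1 := by omega
      rcases this with rfl | rfl
      · exact Or.inr (Or.inr (Or.inr (Or.inr (Or.inl ⟨i, rfl⟩))))
      · exact Or.inr (Or.inr (Or.inr (Or.inr (Or.inr ⟨i, rfl⟩))))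
  · rintro (h | ⟨i, rfl⟩ | ⟨i, rfl⟩ | ⟨i, rfl⟩ | ⟨i, rfl⟩ | ⟨i, rfl⟩)
    · exact Or.inl h
    · exact Or.inr (Or.inl ⟨i, 0, rfl⟩)
    · exact Or.inr (Or.inl ⟨i, 1, rfl⟩)
    · exact Or.inr (Or.inr (Or.inl ⟨i, rfl⟩))
    · exact Or.inr (Or.inr (Or.inr ⟨i, 0, rfl⟩))
    · exact Or.inr (Or.inr (Or.inr ⟨i, 1, rfl⟩))

-- weights of the explicit labeling
lemma wfl_Y : weightLA (G n) (fl n) Y = 4 * n + 1 := by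
  rw [weight_Y]; rfl

lemma wfl_P0 (i : Fin n) : weightLA (G n) (fl n) (P i 0) = 4 * n - 1 - 2 * i.val := by
  rw [weight_P, fl_UP, pq]; simp

lemma wfl_P1 (i : Fin n) : weightLA (G n) (fl n) (P i 1) = 4 * n + 2 + i.val := by
  rw [weight_P, fl_UP, pq]; simp

lemma wfl_U0 (i : Fin n) : weightLA (G n) (fl n) (U i 0) = 5 * n + 1 := by
  have hi := i.isLt
  rw [weight_U, fl_XU, fl_UU, fl_UP, cu, pq]
  simp only [reduceIte]
  omega

lemma wfl_U1 (i : Fin n) : weightLA (G n) (fl n) (U i 1) = 8 * n + 3 := by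
  have hi := i.isLt
  rw [weight_U, fl_XU, fl_UU, fl_UP, cu, pq]
  have h1 : (1 : Fin 2) ≠ 0 := by decide
  rw [if_neg h1, if_neg h1]
  omega

lemma wfl_X_ge (hn : 2 ≤ n) : 10 * n + 1 ≤ weightLA (G n) (fl n) X := by
  rw [weight_X, fl_XY]
  have hb : ∀ p ∈ (Finset.univ : Finset (Fin n × Fin 2)), n + 1 ≤ fl n s(X, U p.1 p.2) := by
    rintro ⟨i, k⟩ -
    have hi := i.isLt
    rw [fl_XU, cu]
    split <;> omega
  have := Finset.card_nsmul_le_sum _ _ _ hb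
  rw [Finset.card_univ] at this
  simp only [Fintype.card_prod, Fintype.card_fin, smul_eq_mul] at this
  have h2 : n * 2 * 3 ≤ n * 2 * (n + 1) := Nat.mul_le_mul_left _ (by omega)
  omega

lemma fl_eval0 (i : Fin n) : fl n s(X, U i 0) = n + 1 + i.val := by
  rw [fl_XU, cu]; simp
lemma fl_eval1 (i : Fin n) : fl n s(X, U i 1) = 4 * n - 2 * i.val := by
  rw [fl_XU, cu]; rfl
lemma fl_eval2 (i : Fin n) : fl n s(U i 0, P i 0) = 4 * n - 1 - 2 * i.val := by
  rw [fl_UP, pq]; simp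
lemma fl_eval3 (i : Fin n) : fl n s(U i 1, P i 1) = 4 * n + 2 + i.val := by
  rw [fl_UP, pq]; rfl

lemma fl_mapsTo : Set.MapsTo (fl n) (G n).edgeSet (Set.Icc 1 (5 * n + 1)) := by
  intro e he
  rw [mem_edgeSet_iff'] at he
  rw [Set.mem_Icc]
  rcases he with rfl | ⟨i, rfl⟩ | ⟨i, rfl⟩ | ⟨i, rfl⟩ | ⟨i, rfl⟩ | ⟨i, rfl⟩ <;>
    [rw [fl_XY]; rw [fl_eval0]; rw [fl_eval1]; rw [fl_UU]; rw [fl_eval2]; rw [fl_eval3]] <;>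
    (try have hi := i.isLt) <;> omega

lemma fl_injOn : Set.InjOn (fl n) (G n).edgeSet := by
  intro e he e' he' hval
  rw [mem_edgeSet_iff'] at he he'
  rcases he with rfl | ⟨i, rfl⟩ | ⟨i, rfl⟩ | ⟨i, rfl⟩ | ⟨i, rfl⟩ | ⟨i, rfl⟩ <;>
    rcases he' with rfl | ⟨j, rfl⟩ | ⟨j, rfl⟩ | ⟨j, rfl⟩ | ⟨j, rfl⟩ | ⟨j, rfl⟩ <;>
    simp only [fl_XY, fl_eval0, fl_eval1, fl_UU, fl_eval2, fl_eval3] at hval <;>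
    first
      | rfl
      | (exfalso
         (try have h1 := i.isLt)
         (try have h2 := j.isLt)
         omega)
      | (have hE : i = j := by
           have h1 := i.isLt
           have h2 := j.isLt
           exact Fin.ext (by omega)
         rw [hE])

lemma fl_surjOn : Set.SurjOn (fl n) (G n).edgeSet (Set.Icc 1 (5 * n + 1)) := by
  intro m hm
  rw [Set.mem_Icc] at hm
  obtain ⟨h1, h2⟩ := hm
  by_cases c1 : m ≤ n
  · refine ⟨s(U ⟨m - 1, by omega⟩ 0, U ⟨m - 1, by omega⟩ 1), ?_, ?_⟩
    · rw [mem_edgeSet_iff']; exact Or.inr (Or.inr (Or.inr (Or.inl ⟨_, rfl⟩)))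
    · rw [fl_UU]; simp only [Fin.val_mk]; omega
  by_cases c2 : m ≤ 2 * n
  · refine ⟨s(X, U ⟨m - n - 1, by omega⟩ 0), ?_, ?_⟩
    · rw [mem_edgeSet_iff']; exact Or.inr (Or.inl ⟨_, rfl⟩)
    · rw [fl_eval0]; simp only [Fin.val_mk]; omega
  by_cases c3 : m ≤ 4 * n
  · by_cases codd : m % 2 = 1
    · refine ⟨s(U ⟨(4 * n - 1 - m) / 2, by omega⟩ 0, P ⟨(4 * n - 1 - m) / 2, by omega⟩ 0), ?_, ?_⟩
      · rw [mem_edgeSet_iff']; exact Or.inr (Or.inr (Or.inr (Or.inr (Or.inl ⟨_, rfl⟩))))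
      · rw [fl_eval2]; simp only [Fin.val_mk]; omega
    · refine ⟨s(X, U ⟨(4 * n - m) / 2, by omega⟩ 1), ?_, ?_⟩
      · rw [mem_edgeSet_iff']; exact Or.inr (Or.inr (Or.inl ⟨_, rfl⟩))
      · rw [fl_eval1]; simp only [Fin.val_mk]; omega
  by_cases c4 : m = 4 * n + 1
  · exact ⟨s(X, Y), by rw [mem_edgeSet_iff']; exact Or.inl rfl, by rw [fl_XY]; omega⟩
  · refine ⟨s(U ⟨m - 4 * n - 2, by omega⟩ 1, P ⟨m - 4 * n - 2, by omega⟩ 1), ?_, ?_⟩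
    · rw [mem_edgeSet_iff']; exact Or.inr (Or.inr (Or.inr (Or.inr (Or.inr ⟨_, rfl⟩))))
    · rw [fl_eval3]; simp only [Fin.val_mk]; omega

lemma fl_bijOn : Set.BijOn (fl n) (G n).edgeSet (Set.Icc 1 (5 * n + 1)) :=
  ⟨fl_mapsTo, fl_injOn, fl_surjOn⟩

lemma adj_cases {a b : V n} (h : (G n).Adj a b) :
    (a = X ∧ b = Y) ∨ (a = Y ∧ b = X) ∨
    (∃ i k, a = X ∧ b = U i k) ∨ (∃ i k, a = U i k ∧ b = X) ∨
    (∃ i k k', a = U i k ∧ b = U i k' ∧ k ≠ k') ∨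
    (∃ i k, a = U i k ∧ b = P i k) ∨ (∃ i k, a = P i k ∧ b = U i k) := by
  have hm : s(a, b) ∈ (G n).edgeSet := (G n).mem_edgeSet.mpr h
  rw [mem_edgeSet_iff] at hm
  rcases hm with hm | ⟨i, k, hm⟩ | ⟨i, hm⟩ | ⟨i, k, hm⟩ <;> rw [Sym2.eq_iff] at hm <;>
    rcases hm with ⟨rfl, rfl⟩ | ⟨rfl, rfl⟩
  · exact Or.inl ⟨rfl, rfl⟩
  · exact Or.inr (Or.inl ⟨rfl, rfl⟩)
  · exact Or.inr (Or.inr (Or.inl ⟨i, k, rfl, rfl⟩))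
  · exact Or.inr (Or.inr (Or.inr (Or.inl ⟨i, k, rfl, rfl⟩)))
  · exact Or.inr (Or.inr (Or.inr (Or.inr (Or.inl ⟨i, 0, 1, rfl, rfl, by decide⟩))))
  · exact Or.inr (Or.inr (Or.inr (Or.inr (Or.inl ⟨i, 1, 0, rfl, rfl, by decide⟩))))
  · exact Or.inr (Or.inr (Or.inr (Or.inr (Or.inr (Or.inl ⟨i, k, rfl, rfl⟩)))))
  · exact Or.inr (Or.inr (Or.inr (Or.inr (Or.inr (Or.inr ⟨i, k, rfl, rfl⟩)))))

lemma wfl_U (i : Fin n) (k : Fin 2) :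
    weightLA (G n) (fl n) (U i k) = 5 * n + 1 ∨ weightLA (G n) (fl n) (U i k) = 8 * n + 3 := by
  have : k = 0 ∨ k = 1 := by omega
  rcases this with rfl | rfl
  · exact Or.inl (wfl_U0 i)
  · exact Or.inr (wfl_U1 i)

lemma fl_adj_ne (hn : 2 ≤ n) :
    ∀ u v, (G n).Adj u v →
      weightLA (G n) (fl n) u ≠ weightLA (G n) (fl n) v := by
  have hX := wfl_X_ge hn
  intro u v h
  rcases adj_cases h with ⟨rfl, rfl⟩ | ⟨rfl, rfl⟩ | ⟨i, k, rfl, rfl⟩ | ⟨i, k, rfl, rfl⟩ |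
    ⟨i, k, k', rfl, rfl, hk⟩ | ⟨i, k, rfl, rfl⟩ | ⟨i, k, rfl, rfl⟩
  · rw [wfl_Y]; omega
  · rw [wfl_Y]; omega
  · rcases wfl_U i k with hw | hw <;> rw [hw] <;> omega
  · rcases wfl_U i k with hw | hw <;> rw [hw] <;> omega
  · have h2 : (k = 0 ∧ k' = 1) ∨ (k = 1 ∧ k' = 0) := by omega
    rcases h2 with ⟨rfl, rfl⟩ | ⟨rfl, rfl⟩
    · rw [wfl_U0, wfl_U1]; omega
    · rw [wfl_U1, wfl_U0]; omega
  · have hi := i.isLt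
    have h2 : (k = 0) ∨ (k = 1) := by omega
    rcases h2 with rfl | rfl
    · rw [wfl_U0, wfl_P0]; omega
    · rw [wfl_U1, wfl_P1]; omega
  · have hi := i.isLt
    have h2 : (k = 0) ∨ (k = 1) := by omega
    rcases h2 with rfl | rfl
    · rw [wfl_U0, wfl_P0]; omega
    · rw [wfl_U1, wfl_P1]; omega

lemma fl_colorCount (hn : 2 ≤ n) : colorCountLA (G n) (fl n) = 2 * n + 3 := by
  have hX := wfl_X_ge hn
  have himg : (Finset.univ.image (weightLA (G n) (fl n))) =
      insert (weightLA (G n) (fl n) X) (insert (8 * n + 3) (insert (4 * n + 1)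
        (((Finset.univ : Finset (Fin n)).image fun i => 4 * n - 1 - 2 * i.val) ∪
         ((Finset.univ : Finset (Fin n)).image fun i => 4 * n + 2 + i.val)))) := by
    ext w
    simp only [Finset.mem_image, Finset.mem_univ, true_and, Finset.mem_insert,
      Finset.mem_union]
    constructor
    · rintro ⟨v, rfl⟩
      rcases v with _ | ⟨⟨i, k⟩ | (j | ⟨i, k, j⟩)⟩
      · exact Or.inl rfl
      · have hi := i.isLt
        have h2 : (k = 0) ∨ (k = 1) := by omega
        rcases h2 with rfl | rfl
        · rw [show (Sum.inr (Sum.inl (i, 0)) : V n) = U i 0 from rfl, wfl_U0]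
          refine Or.inr (Or.inr (Or.inr (Or.inr ⟨⟨n - 1, by omega⟩, ?_⟩)))
          simp only [Fin.val_mk]; omega
        · rw [show (Sum.inr (Sum.inl (i, 1)) : V n) = U i 1 from rfl, wfl_U1]
          exact Or.inr (Or.inl rfl)
      · obtain rfl : j = 0 := Subsingleton.elim _ _
        rw [show (Sum.inr (Sum.inr (Sum.inl 0)) : V n) = Y from rfl, wfl_Y]
        exact Or.inr (Or.inr (Or.inl rfl))
      · obtain rfl : j = 0 := Subsingleton.elim _ _
        have h2 : (k = 0) ∨ (k = 1) := by omega
        rcases h2 with rfl | rfl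
        · rw [show (Sum.inr (Sum.inr (Sum.inr (i, 0, 0))) : V n) = P i 0 from rfl, wfl_P0]
          exact Or.inr (Or.inr (Or.inr (Or.inl ⟨i, rfl⟩)))
        · rw [show (Sum.inr (Sum.inr (Sum.inr (i, 1, 0))) : V n) = P i 1 from rfl, wfl_P1]
          exact Or.inr (Or.inr (Or.inr (Or.inr ⟨i, rfl⟩)))
    · rintro (rfl | rfl | rfl | ⟨i, rfl⟩ | ⟨i, rfl⟩)
      · exact ⟨X, rfl⟩
      · exact ⟨U ⟨0, by omega⟩ 1, wfl_U1 _⟩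
      · exact ⟨Y, wfl_Y⟩
      · exact ⟨P i 0, wfl_P0 i⟩
      · exact ⟨P i 1, wfl_P1 i⟩
  rw [colorCountLA, himg]
  have hc1 : ((Finset.univ : Finset (Fin n)).image fun i => 4 * n - 1 - 2 * i.val).card = n := by
    rw [Finset.card_image_of_injective _ (fun a b hab => by
      have ha := a.isLt; have hb := b.isLt
      exact Fin.ext (by omega : a.val = b.val))]
    simp
  have hc2 : ((Finset.univ : Finset (Fin n)).image fun i => 4 * n + 2 + i.val).card = n := by
    rw [Finset.card_image_of_injective _ (fun a b hab => by
      exact Fin.ext (by omega : a.val = b.val))]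
    simp
  have hd : Disjoint ((Finset.univ : Finset (Fin n)).image fun i => 4 * n - 1 - 2 * i.val)
      ((Finset.univ : Finset (Fin n)).image fun i => 4 * n + 2 + i.val) := by
    rw [Finset.disjoint_left]
    intro w hw hw'
    simp only [Finset.mem_image, Finset.mem_univ, true_and] at hw hw'
    obtain ⟨a, rfl⟩ := hw
    obtain ⟨b, hb⟩ := hw'
    have ha := a.isLt
    omega
  rw [Finset.card_insert_of_notMem (by
    simp only [Finset.mem_insert, Finset.mem_union, Finset.mem_image, Finset.mem_univ,
      true_and, not_or, not_exists]
    refine ⟨by omega, by omega, fun i => ?_, fun i => ?_⟩ <;> (have := i.isLt; omega))]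
  rw [Finset.card_insert_of_notMem (by
    simp only [Finset.mem_insert, Finset.mem_union, Finset.mem_image, Finset.mem_univ,
      true_and, not_or, not_exists]
    refine ⟨by omega, fun i => ?_, fun i => ?_⟩ <;> (have := i.isLt; omega))]
  rw [Finset.card_insert_of_notMem (by
    simp only [Finset.mem_union, Finset.mem_image, Finset.mem_univ, true_and, not_or,
      not_exists]
    refine ⟨fun i => ?_, fun i => ?_⟩ <;> (have := i.isLt; omega))]
  rw [Finset.card_union_of_disjoint hd, hc1, hc2]
  ring


lemma heXY : s(X, Y) ∈ (G n).edgeSet := (mem_edgeSet_iff _).mpr (Or.inl rfl)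
lemma heXU (i : Fin n) (k : Fin 2) : s(X, U i k) ∈ (G n).edgeSet :=
  (mem_edgeSet_iff _).mpr (Or.inr (Or.inl ⟨i, k, rfl⟩))
lemma heUU (i : Fin n) : s(U i 0, U i 1) ∈ (G n).edgeSet :=
  (mem_edgeSet_iff _).mpr (Or.inr (Or.inr (Or.inl ⟨i, rfl⟩)))
lemma heUP (i : Fin n) (k : Fin 2) : s(U i k, P i k) ∈ (G n).edgeSet :=
  (mem_edgeSet_iff _).mpr (Or.inr (Or.inr (Or.inr ⟨i, k, rfl⟩)))

lemma weight_X_sum (f : Sym2 (V n) → ℕ) :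
    weightLA (G n) f X = ∑ e ∈ insert s(X, Y)
      ((Finset.univ : Finset (Fin n × Fin 2)).image fun p => s(X, U p.1 p.2)), f e :=
  weight_eq_sum f X _ (fun e => by
    rw [show (insert s(X, Y)
        ((Finset.univ : Finset (Fin n × Fin 2)).image fun p => s(X, U p.1 p.2)))
        = (G n).edgeFinset.filter (fun e => (X : V n) ∈ e) from filter_X.symm,
      Finset.mem_filter, SimpleGraph.mem_edgeFinset])

lemma lower_bound (hn : 2 ≤ n) (f : Sym2 (V n) → ℕ)
    (hbij : Set.BijOn f (G n).edgeSet (Set.Icc 1 (5 * n + 1)))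
    (hadj : ∀ u v, (G n).Adj u v → weightLA (G n) f u ≠ weightLA (G n) f v) :
    2 * n + 3 ≤ colorCountLA (G n) f := by
  have hmem : ∀ e ∈ (G n).edgeSet, 1 ≤ f e ∧ f e ≤ 5 * n + 1 := fun e he => by
    have := hbij.1 he
    rwa [Set.mem_Icc] at this
  have hinj := hbij.2.1
  -- Step A : the center weight is large
  have hwX : 5 * n + 1 < weightLA (G n) f X := by
    have hXsum := weight_X_sum f
    set Ex : Finset (Sym2 (V n)) := insert s(X, Y)
      ((Finset.univ : Finset (Fin n × Fin 2)).image fun p => s(X, U p.1 p.2)) with hEx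
    have hExsub : ∀ e ∈ Ex, e ∈ (G n).edgeSet := by
      intro e he
      rw [hEx, Finset.mem_insert, Finset.mem_image] at he
      rcases he with rfl | ⟨p, -, rfl⟩
      · exact heXY
      · exact heXU p.1 p.2
    have hcEx : Ex.card = 2 * n + 1 := by
      rw [hEx, Finset.card_insert_of_notMem (by
        simp only [Finset.mem_image, Finset.mem_univ, true_and, Prod.exists, not_exists]
        intro i k h
        simp [Sym2.eq_iff, X, U, Y] at h)]
      rw [Finset.card_image_of_injective _ (by
        rintro ⟨i, k⟩ ⟨i', k'⟩ h
        simpa [Sym2.eq_iff, X, U, Prod.ext_iff] using h)]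
      simp only [Finset.card_univ, Fintype.card_prod, Fintype.card_fin]
      ring
    have hinjEx : Set.InjOn f Ex := fun a ha b hb hab =>
      hinj (hExsub a ha) (hExsub b hb) hab
    have hsum_img : ∑ m ∈ Ex.image f, m = ∑ e ∈ Ex, f e :=
      Finset.sum_image (fun a ha b hb hab => hinjEx (by simpa using ha) (by simpa using hb) hab)
    have hcimg : (Ex.image f).card = 2 * n + 1 := by
      rw [Finset.card_image_of_injOn (fun a ha b hb hab =>
        hinjEx (by simpa using ha) (by simpa using hb) hab), hcEx]
    have hge1 : ∀ m ∈ Ex.image f, 1 ≤ m := by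
      intro m hm
      rw [Finset.mem_image] at hm
      obtain ⟨e, he, rfl⟩ := hm
      exact (hmem e (hExsub e he)).1
    have hlow := sum_distinct_lower (Ex.image f) hge1
    rw [hcimg, hsum_img] at hlow
    have hexp : (2 * n + 1) * (2 * n + 1 + 1) = 4 * (n * n) + 6 * n + 2 := by ring
    have hnn : 2 * n ≤ n * n := Nat.mul_le_mul_right n hn
    rw [hXsum]
    omega
  -- Step B : some triangle vertex has large weight
  have hB : ∃ i k, 5 * n + 1 < weightLA (G n) f (U i k) := by
    have key : ∀ e ∈ (G n).edgeSet, e ≠ s(X, Y) → 5 * n ≤ f e →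
        ∃ i k, 5 * n + 1 < weightLA (G n) f (U i k) := by
      intro e he hne hge
      have htri : ∀ (i : Fin n) (k : Fin 2),
          (f e = f s(X, U i k) ∨ f e = f s(U i 0, U i 1) ∨ f e = f s(U i k, P i k)) →
          5 * n + 1 < weightLA (G n) f (U i k) := by
        intro i k hcase
        rw [weight_U]
        have h1 := hmem _ (heXU i k)
        have h2 := hmem _ (heUU i)
        have h3 := hmem _ (heUP i k)
        have n12 : f s(X, U i k) ≠ f s(U i 0, U i 1) := fun hh => by
          have := hinj (heXU i k) (heUU i) hh
          simp [Sym2.eq_iff, X, U] at this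
        have n13 : f s(X, U i k) ≠ f s(U i k, P i k) := fun hh => by
          have := hinj (heXU i k) (heUP i k) hh
          simp [Sym2.eq_iff, X, U, P] at this
        have n23 : f s(U i 0, U i 1) ≠ f s(U i k, P i k) := fun hh => by
          have := hinj (heUU i) (heUP i k) hh
          simp [Sym2.eq_iff, U, P] at this
        omega
      rw [mem_edgeSet_iff] at he
      rcases he with h | ⟨i, k, rfl⟩ | ⟨i, rfl⟩ | ⟨i, k, rfl⟩
      · exact absurd h hne
      · exact ⟨i, k, htri i k (Or.inl rfl)⟩
      · exact ⟨i, 0, htri i 0 (Or.inr (Or.inl rfl))⟩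
      · exact ⟨i, k, htri i k (Or.inr (Or.inr rfl))⟩
    obtain ⟨e1, he1, hf1⟩ := hbij.2.2 (show (5 * n : ℕ) ∈ Set.Icc 1 (5 * n + 1) by
      rw [Set.mem_Icc]; omega)
    obtain ⟨e2, he2, hf2⟩ := hbij.2.2 (show (5 * n + 1 : ℕ) ∈ Set.Icc 1 (5 * n + 1) by
      rw [Set.mem_Icc]; omega)
    by_cases hxy : e1 = s(X, Y)
    · refine key e2 he2 (fun h => ?_) (by omega)
      rw [← hxy] at h
      rw [h] at hf2
      omega
    · exact key e1 he1 hxy (by omega)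
  obtain ⟨i0, k0, hU⟩ := hB
  have hXU_ne : weightLA (G n) f X ≠ weightLA (G n) f (U i0 k0) :=
    hadj X (U i0 k0) (adj_XU i0 k0)
  -- pendant colors
  set Tp : Finset ℕ := insert (f s(X, Y))
    ((Finset.univ : Finset (Fin n × Fin 2)).image fun p => f s(U p.1 p.2, P p.1 p.2)) with hTp
  have hTple : ∀ w ∈ Tp, w ≤ 5 * n + 1 := by
    intro w hw
    rw [hTp, Finset.mem_insert, Finset.mem_image] at hw
    rcases hw with rfl | ⟨p, -, rfl⟩
    · exact (hmem _ heXY).2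
    · exact (hmem _ (heUP p.1 p.2)).2
  have hTpcard : Tp.card = 2 * n + 1 := by
    rw [hTp, Finset.card_insert_of_notMem (by
      simp only [Finset.mem_image, Finset.mem_univ, true_and, Prod.exists, not_exists]
      intro i k h
      have := hinj heXY (heUP i k) h.symm
      simp [Sym2.eq_iff, X, U, Y, P] at this)]
    rw [Finset.card_image_of_injOn (by
      rintro ⟨i, k⟩ - ⟨i', k'⟩ - h
      have := hinj (heUP i k) (heUP i' k') h
      simpa [Sym2.eq_iff, U, P, Prod.ext_iff] using this)]
    simp only [Finset.card_univ, Fintype.card_prod, Fintype.card_fin]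
    ring
  have hTsub : insert (weightLA (G n) f X) (insert (weightLA (G n) f (U i0 k0)) Tp) ⊆
      Finset.univ.image (weightLA (G n) f) := by
    intro w hw
    rw [Finset.mem_insert, Finset.mem_insert] at hw
    rw [Finset.mem_image]
    rcases hw with rfl | rfl | hw
    · exact ⟨X, Finset.mem_univ _, rfl⟩
    · exact ⟨U i0 k0, Finset.mem_univ _, rfl⟩
    · rw [hTp, Finset.mem_insert, Finset.mem_image] at hw
      rcases hw with rfl | ⟨p, -, rfl⟩
      · exact ⟨Y, Finset.mem_univ _, (weight_Y f).symm ▸ rfl⟩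
      · exact ⟨P p.1 p.2, Finset.mem_univ _, weight_P f p.1 p.2⟩
  have hTcard : (insert (weightLA (G n) f X) (insert (weightLA (G n) f (U i0 k0)) Tp)).card
      = 2 * n + 3 := by
    rw [Finset.card_insert_of_notMem (by
      rw [Finset.mem_insert]
      push_neg
      exact ⟨hXU_ne, fun h => by have := hTple _ h; omega⟩)]
    rw [Finset.card_insert_of_notMem (fun h => by have := hTple _ h; omega)]
    rw [hTpcard]
  have hle := Finset.card_le_card hTsub
  rw [hTcard] at hle
  exact hle

end Stmt16

/-- For all `n ≥ 2`, `χ_la(f_n ∘ O_1) = 2n + 3`. -/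
theorem stmt_16 (n : ℕ) (hn : 2 ≤ n) :
    chiLA (friendshipCorona n 1) = 2 * n + 3 := by
  have hmemS : (2 * n + 3) ∈ {c | ∃ f, IsLocalAntimagicLA (friendshipCorona n 1) f ∧
      colorCountLA (friendshipCorona n 1) f = c} := by
    refine ⟨Stmt16.fl n, ⟨?_, Stmt16.fl_adj_ne hn⟩, Stmt16.fl_colorCount hn⟩
    rw [Stmt16.card_edgeFinset]
    exact Stmt16.fl_bijOn
  apply le_antisymm
  · exact Nat.sInf_le hmemS
  · apply le_csInf ⟨_, hmemS⟩
    rintro c ⟨f, ⟨hbij, hadj⟩, rfl⟩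
    rw [Stmt16.card_edgeFinset] at hbij
    exact Stmt16.lower_bound hn f hbij hadj
end

section
/- For n ≥ 2 and m ≥ 1 with m ≥ 2, any local antimagic labeling of f_n∘O_m in which the maximum label q = m(2n+1)+3n is assigned to an edge incident to some triangle vertex u_1 (either xu_1 or a pendant edge at u_1) induces at least m(2n+1)+3 distinct vertex weights. -/
open scoped Classical

/-! Let `q = m(2n+1)+3n` be the number of edges. The centre has degree `2n+m`, so its weight
exceeds `q`, and so does the weight of the triangle vertex `u₁` carrying the label `q`. The
`m(2n+1)` leaves have pairwise distinct weights, all at most `q`. With at most `m(2n+1)+2`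
colours, every weight above `q` is therefore that of the centre or of `u₁`, so no triangle can
have both of its (adjacent) vertices heavy. Choosing a light vertex in each triangle gives an
independent set of `n` vertices of degree `m+2`; the `n(m+2)` labels around it are distinct,
so they sum to at least `N(N+1)/2` with `N = n(m+2)`, which exceeds `nq` once `m ≥ 2`. -/

open Finset

lemma Finset.card_mul_card_succ_le_two_mul_sum (s : Finset ℕ) (hs : ∀ a ∈ s, 0 < a) :
    #s * (#s + 1) ≤ 2 * ∑ a ∈ s, a := by
  induction s using Finset.induction_on_max with
  | empty => simp
  | insert a s hlt ih =>
    have has : a ∉ s := fun h => (hlt a h).false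
    have hcard : #s + 1 ≤ a := by
      have hsub : s ⊆ Ioo 0 a := fun b hb => mem_Ioo.2 ⟨hs b (mem_insert_of_mem hb), hlt b hb⟩
      have h := card_le_card hsub
      have ha := hs a (mem_insert_self a s)
      simp only [Nat.card_Ioo] at h
      omega
    have := ih fun b hb => hs b (mem_insert_of_mem hb)
    rw [card_insert_of_notMem has, sum_insert has]
    nlinarith

namespace SimpleGraph

variable {V : Type} [Fintype V] [DecidableEq V] (G : SimpleGraph V) (f : Sym2 V → ℕ)

lemma weightLA_eq_sum_incidenceFinset (u : V) :
    weightLA G f u = ∑ e ∈ G.incidenceFinset u, f e := by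
  rw [weightLA, incidenceFinset_eq_filter]

lemma add_le_weightLA {u : V} {e e' : Sym2 V} (he : e ∈ G.incidenceFinset u)
    (he' : e' ∈ G.incidenceFinset u) (hne : e ≠ e') : f e + f e' ≤ weightLA G f u := by
  rw [weightLA_eq_sum_incidenceFinset, ← sum_pair hne]
  exact sum_le_sum_of_subset (insert_subset he (singleton_subset_iff.2 he'))

lemma weightLA_eq_of_neighborFinset_eq_singleton {u w : V} (h : G.neighborFinset u = {w}) :
    weightLA G f u = f s(u, w) := by
  have hadj : G.Adj u w := (G.mem_neighborFinset u w).1 (h ▸ mem_singleton_self w)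
  have hcard : #(G.incidenceFinset u) = 1 := by
    rw [card_incidenceFinset_eq_degree, ← card_neighborFinset_eq_degree, h, card_singleton]
  obtain ⟨e, he⟩ := card_eq_one.1 hcard
  have hmem : s(u, w) ∈ G.incidenceFinset u := by
    simpa [incidenceSet] using hadj
  rw [he, mem_singleton] at hmem
  rw [weightLA_eq_sum_incidenceFinset, he, sum_singleton, hmem]

lemma IsIndepSet.sum_degree_mul_le_two_mul_sum_weightLA {S : Finset V}
    (hS : G.IsIndepSet (S : Set V)) (hinj : Set.InjOn f G.edgeSet)
    (hpos : ∀ e ∈ G.edgeSet, 0 < f e) :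
    (∑ v ∈ S, G.degree v) * (∑ v ∈ S, G.degree v + 1) ≤
      2 * ∑ v ∈ S, weightLA G f v := by
  have hdisj : (S : Set V).PairwiseDisjoint fun v => G.incidenceFinset v := by
    intro a ha b hb hab
    rw [Function.onFun, ← disjoint_coe, coe_incidenceFinset, coe_incidenceFinset,
      Set.disjoint_iff_inter_eq_empty]
    exact G.incidenceSet_inter_incidenceSet_of_not_adj (hS ha hb hab) hab
  set E := S.biUnion fun v => G.incidenceFinset v
  have hE : ∀ e ∈ E, e ∈ G.edgeSet := fun e he => by
    obtain ⟨v, -, hv⟩ := mem_biUnion.1 he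
    exact ((G.mem_incidenceFinset v e).1 hv).1
  have hinjE : Set.InjOn f E := fun e he e' he' => hinj (hE e he) (hE e' he')
  have hcard : #(E.image f) = ∑ v ∈ S, G.degree v := by
    rw [card_image_of_injOn hinjE, card_biUnion hdisj]
    simp
  have hsum : ∑ v ∈ S, weightLA G f v = ∑ a ∈ E.image f, a := by
    rw [sum_image hinjE, sum_biUnion hdisj]
    simp only [weightLA_eq_sum_incidenceFinset]
  rw [hsum, ← hcard]
  refine card_mul_card_succ_le_two_mul_sum _ fun a ha => ?_
  obtain ⟨e, he, rfl⟩ := mem_image.1 ha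
  exact hpos e (hE e he)

end SimpleGraph

namespace FriendshipCorona

open SimpleGraph

variable {n m : ℕ}

abbrev center : FriendCorV n m := Sum.inl ()

abbrev tri (i : Fin n) (k : Fin 2) : FriendCorV n m := Sum.inr (Sum.inl (i, k))

abbrev leaf (z : Fin m ⊕ Fin n × Fin 2 × Fin m) : FriendCorV n m := Sum.inr (Sum.inr z)

def leafParent : Fin m ⊕ Fin n × Fin 2 × Fin m → FriendCorV n m
  | .inl _ => center
  | .inr (i, k, _) => tri i k

lemma adj_center_tri (i : Fin n) (k : Fin 2) :
    (friendshipCorona n m).Adj center (tri i k) := by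
  simp [friendshipCorona]

lemma adj_tri_add_one (i : Fin n) (k : Fin 2) :
    (friendshipCorona n m).Adj (tri i k) (tri i (k + 1)) := by
  fin_cases k <;> simp [friendshipCorona]

lemma adj_tri_leaf (i : Fin n) (k : Fin 2) (j : Fin m) :
    (friendshipCorona n m).Adj (tri i k) (leaf (.inr (i, k, j))) := by
  simp [friendshipCorona]

lemma not_adj_tri_of_ne {i i' : Fin n} (h : i ≠ i') (k k' : Fin 2) :
    ¬(friendshipCorona n m).Adj (tri i k) (tri i' k') := by
  simp [friendshipCorona, h, Ne.symm h]

lemma degree_center : (friendshipCorona n m).degree center = 2 * n + m := by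
  rw [← card_neighborFinset_eq_degree, neighborFinset_eq_filter, card_filter,
    Fintype.sum_sum_type, Fintype.sum_sum_type, Fintype.sum_sum_type]
  simp [friendshipCorona, mul_comm]

lemma degree_tri (i : Fin n) (k : Fin 2) : (friendshipCorona n m).degree (tri i k) = m + 2 := by
  rw [← card_neighborFinset_eq_degree, neighborFinset_eq_filter, card_filter,
    Fintype.sum_sum_type, Fintype.sum_sum_type, Fintype.sum_sum_type]
  simp only [Fintype.sum_prod_type, Fin.sum_univ_two]
  fin_cases k <;> simp +arith [friendshipCorona, eq_comm]

lemma neighborFinset_leaf (z : Fin m ⊕ Fin n × Fin 2 × Fin m) :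
    (friendshipCorona n m).neighborFinset (leaf z) = {leafParent z} := by
  ext v
  rw [mem_neighborFinset, mem_singleton]
  rcases z with j | ⟨i, k, j⟩ <;> rcases v with _ | ⟨i', k'⟩ | j' | ⟨i', k', j'⟩ <;>
    simp [friendshipCorona, leafParent]

lemma degree_leaf (z : Fin m ⊕ Fin n × Fin 2 × Fin m) :
    (friendshipCorona n m).degree (leaf z) = 1 := by
  rw [← card_neighborFinset_eq_degree, neighborFinset_leaf, card_singleton]

lemma card_edgeFinset : #(friendshipCorona n m).edgeFinset = m * (2 * n + 1) + 3 * n := by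
  have h := sum_degrees_eq_twice_card_edges (friendshipCorona n m)
  simp only [Fintype.sum_sum_type, Fintype.sum_prod_type, Fintype.sum_unique] at h
  simp only [PUnit.default_eq_unit, degree_center, degree_tri, degree_leaf, sum_const, card_univ,
    Fintype.card_fin, smul_eq_mul, mul_one] at h
  linarith

def leafEdge (z : Fin m ⊕ Fin n × Fin 2 × Fin m) : Sym2 (FriendCorV n m) :=
  s(leaf z, leafParent z)

lemma leafEdge_mem_edgeSet (z : Fin m ⊕ Fin n × Fin 2 × Fin m) :
    leafEdge z ∈ (friendshipCorona n m).edgeSet := by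
  rw [leafEdge, mem_edgeSet, ← mem_neighborFinset, neighborFinset_leaf, mem_singleton]

lemma leafEdge_injective : Function.Injective (leafEdge (n := n) (m := m)) := by
  intro z z' h
  rcases z with j | ⟨i, k, j⟩ <;> rcases z' with j' | ⟨i', k', j'⟩ <;>
    simp_all [leafEdge, leafParent]

lemma weightLA_leaf (f : Sym2 (FriendCorV n m) → ℕ) (z : Fin m ⊕ Fin n × Fin 2 × Fin m) :
    weightLA (friendshipCorona n m) f (leaf z) = f (leafEdge z) :=
  weightLA_eq_of_neighborFinset_eq_singleton _ f (neighborFinset_leaf z)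

variable {f : Sym2 (FriendCorV n m) → ℕ}

lemma lt_weightLA_center (hn : 2 ≤ n) (hf : IsLocalAntimagicLA (friendshipCorona n m) f) :
    m * (2 * n + 1) + 3 * n < weightLA (friendshipCorona n m) f center := by
  have h := IsIndepSet.sum_degree_mul_le_two_mul_sum_weightLA _ f (S := {center}) (by simp)
    hf.1.injOn fun e he => (hf.1.mapsTo he).1
  simp only [sum_singleton, degree_center] at h
  nlinarith [Nat.mul_le_mul_right n hn, Nat.le_mul_self m]

lemma lt_weightLA_tri (hf : IsLocalAntimagicLA (friendshipCorona n m) f)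
    {i : Fin n} {k : Fin 2}
    (hmax : f s(center, tri i k) = m * (2 * n + 1) + 3 * n ∨
      ∃ j, f s(tri i k, leaf (.inr (i, k, j))) = m * (2 * n + 1) + 3 * n) :
    m * (2 * n + 1) + 3 * n < weightLA (friendshipCorona n m) f (tri i k) := by
  obtain ⟨e, he, hne, hfe⟩ : ∃ e ∈ (friendshipCorona n m).incidenceFinset (tri i k),
      e ≠ s(tri i k, tri i (k + 1)) ∧ f e = m * (2 * n + 1) + 3 * n := by
    rcases hmax with h | ⟨j, h⟩
    · exact ⟨_, by simp [incidenceSet, adj_center_tri], by simp, h⟩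
    · exact ⟨_, by simp [incidenceSet, adj_tri_leaf], by simp, h⟩
  have hpartner :
      s(tri i k, tri i (k + 1)) ∈ (friendshipCorona n m).incidenceFinset (tri i k) := by
    simp [incidenceSet, adj_tri_add_one]
  have := add_le_weightLA _ f he hpartner hne
  have := (hf.1.mapsTo (mem_edgeFinset.1 (incidenceFinset_subset _ _ hpartner))).1
  omega

lemma weightLA_eq_or_eq_or_le (hf : IsLocalAntimagicLA (friendshipCorona n m) f)
    (hcount : colorCountLA (friendshipCorona n m) f ≤ m * (2 * n + 1) + 2) {a b : FriendCorV n m}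
    (ha : m * (2 * n + 1) + 3 * n < weightLA (friendshipCorona n m) f a)
    (hb : m * (2 * n + 1) + 3 * n < weightLA (friendshipCorona n m) f b)
    (hab : weightLA (friendshipCorona n m) f a ≠ weightLA (friendshipCorona n m) f b)
    (v : FriendCorV n m) :
    weightLA (friendshipCorona n m) f v = weightLA (friendshipCorona n m) f a ∨
      weightLA (friendshipCorona n m) f v = weightLA (friendshipCorona n m) f b ∨
      weightLA (friendshipCorona n m) f v ≤ m * (2 * n + 1) + 3 * n := by
  set w := weightLA (friendshipCorona n m) f
  set L := univ.image fun z => w (leaf z)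
  have hL : ∀ c ∈ L, c ≤ m * (2 * n + 1) + 3 * n := by
    simp only [L, mem_image, mem_univ, true_and, forall_exists_index, forall_apply_eq_imp_iff]
    intro z
    simp only [w, weightLA_leaf]
    rw [← card_edgeFinset]
    exact (hf.1.mapsTo (leafEdge_mem_edgeSet z)).2
  have hLcard : #L = m * (2 * n + 1) := by
    rw [card_image_of_injective]
    · simp only [card_univ, Fintype.card_sum, Fintype.card_prod, Fintype.card_fin]
      ring
    · intro z z' h
      simp only [w, weightLA_leaf] at h
      exact leafEdge_injective
        (hf.1.injOn (leafEdge_mem_edgeSet z) (leafEdge_mem_edgeSet z') h)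
  have hsub : insert (w a) (insert (w b) L) ⊆ univ.image w := by
    simp [insert_subset_iff, L, image_subset_iff]
  have hcard : #(insert (w a) (insert (w b) L)) = m * (2 * n + 1) + 2 := by
    rw [card_insert_of_notMem, card_insert_of_notMem, hLcard]
    · exact fun h => (hL _ h).not_gt hb
    · simp only [mem_insert, not_or]
      exact ⟨hab, fun h => (hL _ h).not_gt ha⟩
  have heq := eq_of_subset_of_card_le hsub (hcard ▸ hcount)
  have hv : w v ∈ insert (w a) (insert (w b) L) := heq ▸ mem_image_of_mem w (mem_univ v)
  simp only [mem_insert] at hv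
  exact hv.imp_right (Or.imp_right (hL _))

lemma exists_forall_lt_weightLA_tri (hn : 0 < n) (hm : 2 ≤ m)
    (hf : IsLocalAntimagicLA (friendshipCorona n m) f) :
    ∃ i, ∀ k, m * (2 * n + 1) + 3 * n < weightLA (friendshipCorona n m) f (tri i k) := by
  by_contra! hlight
  choose k hk using hlight
  have hinj : Function.Injective fun i => (tri i (k i) : FriendCorV n m) := by
    intro i i' h
    simp only [tri, Sum.inr.injEq, Sum.inl.injEq, Prod.mk.injEq] at h
    exact h.1
  have hS : (friendshipCorona n m).IsIndepSet ↑(univ.map ⟨_, hinj⟩) := by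
    rw [coe_map, Function.Embedding.coeFn_mk, coe_univ, IsIndepSet, hinj.injOn.pairwise_image]
    exact fun i _ i' _ h => not_adj_tri_of_ne h _ _
  have hlow := hS.sum_degree_mul_le_two_mul_sum_weightLA _ f hf.1.injOn
    fun e he => (hf.1.mapsTo he).1
  have hup : ∑ i, weightLA (friendshipCorona n m) f (tri i (k i)) ≤
      n * (m * (2 * n + 1) + 3 * n) := by
    simpa using sum_le_card_nsmul univ _ _ fun i _ => hk i
  simp only [sum_map, Function.Embedding.coeFn_mk, degree_tri, sum_const, card_univ,
    Fintype.card_fin, smul_eq_mul] at hlow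
  have hscaled : n * ((m + 2) * (n * (m + 2) + 1)) ≤ n * (2 * (m * (2 * n + 1) + 3 * n)) := by
    linarith
  have := Nat.le_of_mul_le_mul_left hscaled hn
  nlinarith [Nat.mul_le_mul_left (n * m) hm, Nat.mul_le_mul_left m hn, Nat.mul_le_mul_left n hm]

end FriendshipCorona

open FriendshipCorona

/-- For `n ≥ 2` and `m ≥ 2`, any local antimagic labeling of `f_n ∘ O_m`
assigning the maximum label `q = m(2n+1)+3n` to an edge joining the center
`x` to a triangle vertex `u`, or to a pendant edge at a triangle vertex `u`,
induces at least `m(2n+1) + 3` distinct vertex weights. -/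
theorem stmt_18 (n m : ℕ) (hn : 2 ≤ n) (hm : 2 ≤ m)
    (f : Sym2 (FriendCorV n m) → ℕ)
    (hf : IsLocalAntimagicLA (friendshipCorona n m) f)
    (hmax : ∃ i : Fin n, ∃ k : Fin 2,
      f s((Sum.inl () : FriendCorV n m), Sum.inr (Sum.inl (i, k)))
          = m * (2 * n + 1) + 3 * n ∨
      ∃ j : Fin m,
        f s((Sum.inr (Sum.inl (i, k)) : FriendCorV n m),
            Sum.inr (Sum.inr (Sum.inr (i, k, j))))
          = m * (2 * n + 1) + 3 * n) :
    m * (2 * n + 1) + 3 ≤ colorCountLA (friendshipCorona n m) f := by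
  obtain ⟨i₀, k₀, hmax₀⟩ := hmax
  have hx := lt_weightLA_center hn hf
  have hu := lt_weightLA_tri hf hmax₀
  by_contra! hcount
  obtain ⟨i, hi⟩ := exists_forall_lt_weightLA_tri (by omega) hm hf
  have hcover := weightLA_eq_or_eq_or_le hf (by omega) hx hu (hf.2 _ _ (adj_center_tri i₀ k₀))
  have heavy (k : Fin 2) : weightLA (friendshipCorona n m) f (tri i k) =
      weightLA (friendshipCorona n m) f (tri i₀ k₀) := by
    rcases hcover (tri i k) with h | h | h
    · exact absurd h.symm (hf.2 _ _ (adj_center_tri i k))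
    · exact h
    · exact absurd h (hi k).not_ge
  exact hf.2 _ _ (adj_tri_add_one i 0) ((heavy 0).trans (heavy _).symm)
end

section
/- For n ≥ 2 and m ≥ 1, let q = m(2n+1)+3n and choose one vertex from each triangle pair {u_i, v_i}. Then the sum of the labels on the n(m+2) edges incident to these n chosen vertices is at least n(m+2)(n(m+2)+1)/2, while if each such vertex had weight exactly q this sum would be exactly nq; and n(m+2)(n(m+2)+1)/2 > nq exactly when m ≥ 2. -/
lemma aux_base (S : Finset ℕ) : ∑ i ∈ Finset.range S.card, i ≤ ∑ x ∈ S, x := by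
  induction S using Finset.strongInduction with
  | _ S ih =>
    rcases S.eq_empty_or_nonempty with rfl | hS
    · simp
    · set M := S.max' hS with hM
      have hmem : M ∈ S := S.max'_mem hS
      have hsub : S.erase M ⊂ S := Finset.erase_ssubset hmem
      have h1 := ih _ hsub
      have hcard : (S.erase M).card = S.card - 1 := Finset.card_erase_of_mem hmem
      have hpos : 1 ≤ S.card := Finset.card_pos.mpr hS
      have hMb : S.card - 1 ≤ M := by
        have : S ⊆ Finset.range (M + 1) := by
          intro x hx
          simp only [Finset.mem_range]
          exact Nat.lt_succ_of_le (S.le_max' x hx)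
        have := Finset.card_le_card this
        simp only [Finset.card_range] at this
        omega
      have hsum : ∑ x ∈ S, x = M + ∑ x ∈ S.erase M, x :=
        (Finset.add_sum_erase S id hmem).symm
      obtain ⟨c, hc⟩ : ∃ c, S.card = c + 1 := ⟨S.card - 1, by omega⟩
      have hr : ∑ i ∈ Finset.range S.card, i
          = (S.card - 1) + ∑ i ∈ Finset.range (S.card - 1), i := by
        rw [hc, Finset.sum_range_succ, Nat.add_sub_cancel, Nat.add_comm]
      rw [hsum, hr]
      rw [hcard] at h1
      omega

lemma aux_pos (S : Finset ℕ) (hpos : ∀ x ∈ S, 1 ≤ x) :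
    ∑ i ∈ Finset.range (S.card + 1), i ≤ ∑ x ∈ S, x := by
  classical
  set T := S.image (· - 1) with hT
  have hinj : Set.InjOn (· - 1) S := by
    intro a ha b hb hab
    have := hpos a ha; have := hpos b hb
    simp only at hab; omega
  have hcard : T.card = S.card := Finset.card_image_of_injOn hinj
  have h1 : ∑ y ∈ T, y = ∑ x ∈ S, (x - 1) := Finset.sum_image (fun a ha b hb => hinj ha hb)
  have h2 := aux_base T
  rw [hcard, h1] at h2
  have h3 : ∑ x ∈ S, x = ∑ x ∈ S, (x - 1) + S.card := by
    rw [Finset.card_eq_sum_ones, ← Finset.sum_add_distrib]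
    exact Finset.sum_congr rfl (fun x hx => by have := hpos x hx; omega)
  rw [Finset.sum_range_succ, h3]
  omega

/-- For `n ≥ 2`, `m ≥ 1`, `q = m(2n+1)+3n`: any `n(m+2)` distinct positive
integer labels sum to at least `1+2+⋯+n(m+2) = n(m+2)(n(m+2)+1)/2`; if each
of the `n` chosen vertices (of degree `m+2`) had weight exactly `q`, the sum
would be exactly `nq`; and `n(m+2)(n(m+2)+1)/2 > nq` exactly when `m ≥ 2`. -/
theorem stmt_19 (n m q : ℕ) (hn : 2 ≤ n) (hm : 1 ≤ m)
    (hq : q = m * (2 * n + 1) + 3 * n) :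
    (∀ S : Finset ℕ, S.card = n * (m + 2) → (∀ x ∈ S, 1 ≤ x) →
        n * (m + 2) * (n * (m + 2) + 1) / 2 ≤ ∑ x ∈ S, x) ∧
    (∀ w : Fin n → ℕ, (∀ i, w i = q) → ∑ i, w i = n * q) ∧
    (n * q < n * (m + 2) * (n * (m + 2) + 1) / 2 ↔ 2 ≤ m) := by
  set k := n * (m + 2) with hk
  have hdiv : k * (k + 1) / 2 = ∑ i ∈ Finset.range (k + 1), i := by
    rw [Finset.sum_range_id, Nat.add_sub_cancel, Nat.mul_comm]
  refine ⟨?_, ?_, ?_⟩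
  · intro S hScard hSpos
    have := aux_pos S hSpos
    rw [hScard] at this
    rw [hdiv]; exact this
  · intro w hw
    simp [hw, Finset.sum_const, Finset.card_univ]
  · have h2 : 2 * (k * (k + 1) / 2) = k * (k + 1) := by
      rcases Nat.even_mul_succ_self k with ⟨c, hc⟩
      omega
    constructor
    · intro h
      by_contra hm2
      have hm1 : m = 1 := by omega
      subst hm1
      have : 2 * (n * q) < k * (k + 1) := by omega
      rw [hq, hk] at this
      nlinarith
    · intro h
      have : 2 * (n * q) < k * (k + 1) := by
        rw [hq, hk]
        have h1 : 2 * m ≤ n * m := Nat.mul_le_mul_right m hn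
        have h2 : 2 * n ≤ m * n := Nat.mul_le_mul_right n h
        have h3 : n * m * 2 ≤ n * m * m := Nat.mul_le_mul_left (n * m) h
        nlinarith
      omega
end
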